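/- arXiv:1606.01462 — 3 statements merged into one kernel-verified Lean document; each statement's English description precedes it below -/
import Mathlib

section
/- Let A = (a_{ij}) be a real n×n matrix with a_{ij} ≤ 0 for all i ≠ j and with all row sums positive, i.e. Σ_{j} a_{ij} > 0 for every i. Then det A > 0. -/
/-- Auxiliary: such a matrix is nonsingular (strict diagonal dominance). -/
lemma aux_det_ne_zero {n : ℕ} (B : Matrix (Fin n) (Fin n) ℝ)
    (hoff : ∀ i j, i ≠ j → B i j ≤ 0)
    (hrow : ∀ i, 0 < ∑ j, B i j) : B.det ≠ 0 := by
  intro hdet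
  obtain ⟨v, hv, hmul⟩ := (Matrix.exists_mulVec_eq_zero_iff).2 hdet
  have hne : (Finset.univ : Finset (Fin n)).Nonempty := by
    obtain ⟨i, _⟩ := Function.ne_iff.1 hv
    exact ⟨i, Finset.mem_univ i⟩
  obtain ⟨i, -, hmax⟩ := Finset.exists_max_image Finset.univ (fun j => |v j|) hne
  have hvi : 0 < |v i| := by
    obtain ⟨j, hj⟩ := Function.ne_iff.1 hv
    exact lt_of_lt_of_le (abs_pos.2 hj) (hmax j (Finset.mem_univ j))
  have hBii : 0 < B i i := by
    have h1 : ∑ j ∈ Finset.univ.erase i, B i j ≤ 0 :=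
      Finset.sum_nonpos fun j hj => hoff i j (Ne.symm (Finset.ne_of_mem_erase hj))
    have h2 := hrow i
    rw [← Finset.add_sum_erase _ _ (Finset.mem_univ i)] at h2
    linarith
  have hdom : ∑ j ∈ Finset.univ.erase i, (-B i j) < B i i := by
    have h2 := hrow i
    rw [← Finset.add_sum_erase _ _ (Finset.mem_univ i)] at h2
    have : ∑ j ∈ Finset.univ.erase i, (-B i j) = -∑ j ∈ Finset.univ.erase i, B i j := by
      simp [Finset.sum_neg_distrib]
    linarith [this]
  have heq : ∑ j, B i j * v j = 0 := congrFun hmul i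
  rw [← Finset.add_sum_erase _ _ (Finset.mem_univ i)] at heq
  have key : B i i * |v i| ≤ (∑ j ∈ Finset.univ.erase i, (-B i j)) * |v i| := by
    have h0 : B i i * |v i| = |B i i * v i| := by
      rw [abs_mul, abs_of_pos hBii]
    rw [h0]
    have h1 : B i i * v i = -∑ j ∈ Finset.univ.erase i, B i j * v j := by linarith
    rw [h1, abs_neg]
    calc |∑ j ∈ Finset.univ.erase i, B i j * v j|
        ≤ ∑ j ∈ Finset.univ.erase i, |B i j * v j| := Finset.abs_sum_le_sum_abs _ _
      _ ≤ ∑ j ∈ Finset.univ.erase i, (-B i j) * |v i| := by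
          refine Finset.sum_le_sum fun j hj => ?_
          rw [abs_mul, abs_of_nonpos (hoff i j (Ne.symm (Finset.ne_of_mem_erase hj)))]
          exact mul_le_mul_of_nonneg_left (hmax j (Finset.mem_univ j)) (neg_nonneg.2 (hoff i j (Ne.symm (Finset.ne_of_mem_erase hj))))
      _ = (∑ j ∈ Finset.univ.erase i, (-B i j)) * |v i| := by rw [Finset.sum_mul]
  have : (∑ j ∈ Finset.univ.erase i, (-B i j)) * |v i| < B i i * |v i| :=
    mul_lt_mul_of_pos_right hdom hvi
  linarith

/-- A real `n × n` matrix with nonpositive off-diagonal entries and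
strictly positive row sums has positive determinant. -/
theorem det_pos_of_offdiag_nonpos_rowsum_pos (n : ℕ) (hn : 0 < n)
    (A : Matrix (Fin n) (Fin n) ℝ)
    (hoff : ∀ i j, i ≠ j → A i j ≤ 0)
    (hrow : ∀ i, 0 < ∑ j, A i j) :
    0 < A.det := by
  set g : ℝ → ℝ := fun t => ((1 - t) • A + t • (1 : Matrix (Fin n) (Fin n) ℝ)).det with hg
  have hcont : Continuous g := by
    apply Continuous.matrix_det
    exact ((continuous_const.sub continuous_id).smul continuous_const).add
      (continuous_id.smul continuous_const)
  have hne : ∀ t ∈ Set.Icc (0:ℝ) 1, g t ≠ 0 := by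
    intro t ht
    apply aux_det_ne_zero
    · intro i j hij
      have : ((1 - t) • A + t • (1 : Matrix (Fin n) (Fin n) ℝ)) i j
          = (1 - t) * A i j + t * (1 : Matrix (Fin n) (Fin n) ℝ) i j := rfl
      rw [this, Matrix.one_apply_ne hij]
      have := mul_nonpos_of_nonneg_of_nonpos (by linarith [ht.2] : (0:ℝ) ≤ 1 - t) (hoff i j hij)
      linarith
    · intro i
      have hsum : ∑ j, ((1 - t) • A + t • (1 : Matrix (Fin n) (Fin n) ℝ)) i j
          = (1 - t) * (∑ j, A i j) + t := by
        simp [Matrix.add_apply, Matrix.smul_apply, Finset.sum_add_distrib,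
          Finset.mul_sum, Matrix.one_apply]
      rw [hsum]
      rcases eq_or_lt_of_le ht.1 with h | h
      · have : t = 0 := h.symm
        simp [this]
        linarith [hrow i]
      · have : 0 ≤ (1 - t) * (∑ j, A i j) :=
          mul_nonneg (by linarith [ht.2]) (le_of_lt (hrow i))
        linarith
  have hg0 : g 0 = A.det := by simp [hg]
  have hg1 : g 1 = 1 := by simp [hg]
  by_contra hle
  push_neg at hle
  have hA0 : A.det ≠ 0 := hne 0 (by norm_num) ∘ (hg0.trans ·)
  have hAneg : g 0 < 0 := by rw [hg0]; exact lt_of_le_of_ne hle hA0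
  have := intermediate_value_Icc (by norm_num : (0:ℝ) ≤ 1) hcont.continuousOn
  have h0mem : (0:ℝ) ∈ Set.Icc (g 0) (g 1) := ⟨le_of_lt hAneg, by rw [hg1]; norm_num⟩
  obtain ⟨c, hc, hgc⟩ := this h0mem
  exact hne c hc hgc
end

section
/- Let A = (a_{ij}) be a real n×n matrix with a_{ij} ≤ 0 for all i ≠ j and with all row sums positive, i.e. Σ_{j} a_{ij} > 0 for every i. Then every principal minor of A is positive: for every nonempty subset T of {1, …, n}, the determinant of the submatrix of A obtained by keeping the rows and columns indexed by T is positive. -/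
open Matrix Polynomial Finset

/-- Evaluating the characteristic polynomial. -/
lemma eval_charpoly_aux {ι : Type*} [Fintype ι] [DecidableEq ι]
    (M : Matrix ι ι ℝ) (t : ℝ) :
    (M.charpoly).eval t = (t • (1 : Matrix ι ι ℝ) - M).det := by
  rw [Matrix.charpoly, show Polynomial.eval t = (Polynomial.evalRingHom t : ℝ[X] →+* ℝ) from rfl,
    RingHom.map_det]
  congr 1
  ext i j
  by_cases h : i = j
  · subst h
    simp [Matrix.charmatrix_apply_eq, Matrix.one_apply]
  · simp [Matrix.charmatrix_apply_ne _ _ _ h, Matrix.one_apply_ne h]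

/-- Key lemma: offdiag nonpositive + positive row sums implies positive determinant. -/
lemma det_pos_aux {ι : Type*} [Fintype ι] [DecidableEq ι] [Nonempty ι]
    (B : Matrix ι ι ℝ)
    (hoff : ∀ i j, i ≠ j → B i j ≤ 0)
    (hrow : ∀ i, 0 < ∑ j, B i j) :
    0 < B.det := by
  -- the matrices B + t•1 for t ≥ 0 all have nonzero determinant
  have hne : ∀ t : ℝ, 0 ≤ t → (B + t • (1 : Matrix ι ι ℝ)).det ≠ 0 := by
    intro t ht
    apply det_ne_zero_of_sum_row_lt_diag
    intro k
    have hdiagk : (B + t • (1 : Matrix ι ι ℝ)) k k = B k k + t := by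
      simp [Matrix.one_apply]
    have hsum : ∑ j ∈ Finset.univ.erase k, ‖(B + t • (1 : Matrix ι ι ℝ)) k j‖
        = ∑ j ∈ Finset.univ.erase k, (-(B k j)) := by
      apply Finset.sum_congr rfl
      intro j hj
      have hjk : j ≠ k := (Finset.mem_erase.mp hj).1
      have : (B + t • (1 : Matrix ι ι ℝ)) k j = B k j := by
        simp [Matrix.one_apply_ne (Ne.symm hjk)]
      rw [this, Real.norm_eq_abs, abs_of_nonpos (hoff k j (Ne.symm hjk))]
    rw [hsum, hdiagk]
    have hrs := hrow k
    have hsplit : B k k = (∑ j, B k j) + ∑ j ∈ Finset.univ.erase k, (-(B k j)) := by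
      rw [← Finset.add_sum_erase _ _ (Finset.mem_univ k)]
      ring_nf
      rw [Finset.sum_neg_distrib]
      ring
    have hBkk : ∑ j ∈ Finset.univ.erase k, (-(B k j)) < B k k := by
      rw [hsplit]; linarith
    have hpos : 0 < B k k + t := by
      have h0 : 0 ≤ ∑ j ∈ Finset.univ.erase k, (-(B k j)) :=
        Finset.sum_nonneg fun j hj =>
          neg_nonneg.mpr (hoff k j (Ne.symm (Finset.mem_erase.mp hj).1))
      linarith
    rw [Real.norm_eq_abs, abs_of_pos hpos]
    linarith
  -- express det (B + t•1) as polynomial evaluation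
  set p := (-B).charpoly with hp
  have heval : ∀ t : ℝ, p.eval t = (B + t • (1 : Matrix ι ι ℝ)).det := by
    intro t
    rw [hp, eval_charpoly_aux]
    congr 1
    rw [sub_neg_eq_add, add_comm]
  -- p tends to +∞
  have hmono := Matrix.charpoly_monic (-B)
  have hdeg : 0 < p.degree := by
    rw [hp, Matrix.charpoly_degree_eq_dim]
    exact_mod_cast Fintype.card_pos
  have htop : Filter.Tendsto (fun t => p.eval t) Filter.atTop Filter.atTop :=
    p.tendsto_atTop_of_leadingCoeff_nonneg hdeg (by rw [hmono.leadingCoeff]; norm_num)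
  obtain ⟨t0, ht0⟩ := (htop.eventually_ge_atTop 1).and (Filter.eventually_ge_atTop 0)
    |>.exists
  obtain ⟨h1, h2⟩ := ht0
  -- p never vanishes on [0, ∞); p t0 > 0, hence p 0 > 0
  have hne' : ∀ t : ℝ, 0 ≤ t → p.eval t ≠ 0 := fun t ht => (heval t) ▸ hne t ht
  have h0 : 0 < p.eval 0 := by
    by_contra h
    push_neg at h
    have h0lt : p.eval 0 < 0 := lt_of_le_of_ne h (hne' 0 le_rfl)
    have hcont : ContinuousOn (fun t => p.eval t) (Set.Icc 0 t0) :=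
      (Polynomial.continuous p).continuousOn
    have : (0 : ℝ) ∈ Set.Icc (p.eval 0) (p.eval t0) := ⟨le_of_lt h0lt, by linarith⟩
    obtain ⟨c, hc, hc0⟩ := intermediate_value_Icc h2 hcont this
    exact hne' c hc.1 hc0
  have := heval 0
  simp only [zero_smul, add_zero] at this
  linarith [this ▸ h0]

/-- A real `n × n` matrix with nonpositive off-diagonal entries and
strictly positive row sums has all its principal minors positive. -/
theorem principal_minors_pos_of_offdiag_nonpos_rowsum_pos (n : ℕ) (hn : 0 < n)
    (A : Matrix (Fin n) (Fin n) ℝ)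
    (hoff : ∀ i j, i ≠ j → A i j ≤ 0)
    (hrow : ∀ i, 0 < ∑ j, A i j) :
    ∀ T : Finset (Fin n), T.Nonempty →
      0 < (A.submatrix (fun i : T => (i : Fin n)) (fun j : T => (j : Fin n))).det := by
  intro T hT
  haveI : Nonempty T := hT.to_subtype
  apply det_pos_aux
  · intro i j hij
    exact hoff i j (fun h => hij (Subtype.ext h))
  · intro i
    have h1 : ∑ j : T, A i j = ∑ j ∈ T, A i j :=
      Finset.sum_coe_sort T (fun j => A (i : Fin n) j)
    have h2 : ∑ j ∈ T, A i j ≥ ∑ j, A i j := by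
      have := Finset.sum_le_sum_of_subset_of_nonneg (Finset.subset_univ T)
        (f := fun j => -(A (i : Fin n) j)) ?_
      · rw [Finset.sum_neg_distrib, Finset.sum_neg_distrib] at this
        linarith
      · intro j _ hjT
        have : (j : Fin n) ≠ (i : Fin n) := fun h => hjT (h ▸ i.2)
        exact neg_nonneg.mpr (hoff i j (Ne.symm this))
    calc 0 < ∑ j, A i j := hrow i
      _ ≤ ∑ j ∈ T, A i j := h2
      _ = ∑ j : T, A (i : Fin n) (j : Fin n) := h1.symm
end

section
/- Let Q = (q_{ij}) be an m×m generator matrix, let ζ ∈ ℝ^m satisfy Q ζ = −μ + c 𝟙 where c = Σ_{i∈S} π_i μ(i) and 𝟙 is the all-ones vector, and let p > 1 satisfy p + ζ_i > 0 and (p/(p + ζ_i)) c + σ₁²(i)/(2p) + ζ_i μ(i)/(p + ζ_i) < 0 for every i ∈ S. Then there exists a constant K > 0 such that for all x > 0 and all i ∈ S, (1/p)(p + ζ_i) x^{1/p} [ μ(i) + Σ_{k} q_{ik} ζ_k − b(i) x^{θ(i)} + ((1 − p)/(2p)) σ₂²(i) x^{2γ(i)} + σ₁²(i)/(2p) − (ζ_i/(p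 + ζ_i)) Σ_{k} q_{ik} ζ_k ] ≤ −K x^{1/p}. -/
/-- Under the Poisson-system and smallness hypotheses on `p` and `ζ`,
the Lyapunov drift is bounded above by `-K x^(1/p)` for some constant `K > 0`. -/
theorem lyapunov_drift_bound (m : ℕ) (hm : 0 < m)
    (a σ₁ σ₂ b θ γ : Fin m → ℝ)
    (hb : ∀ i, 0 < b i) (hθ : ∀ i, 0 < θ i) (hγ : ∀ i, 0 < γ i)
    (μ : Fin m → ℝ) (hμ : ∀ i, μ i = a i - σ₁ i ^ 2 / 2)
    (π : Fin m → ℝ) (hπ : ∀ i, 0 < π i) (hπsum : ∑ i, π i = 1)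
    (Q : Matrix (Fin m) (Fin m) ℝ)
    (hQoff : ∀ i j, i ≠ j → 0 ≤ Q i j)
    (hQrow : ∀ i, ∑ j, Q i j = 0)
    (c : ℝ) (hc : c = ∑ i, π i * μ i)
    (ζ : Fin m → ℝ)
    (hζ : Q.mulVec ζ = -μ + c • (fun _ => (1 : ℝ)))
    (p : ℝ) (hp : 1 < p)
    (hpζ : ∀ i, 0 < p + ζ i)
    (hpcond : ∀ i, (p / (p + ζ i)) * c + σ₁ i ^ 2 / (2 * p)
                  + ζ i * μ i / (p + ζ i) < 0) :
    ∃ K : ℝ, 0 < K ∧ ∀ x : ℝ, 0 < x → ∀ i,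
      (1 / p) * (p + ζ i) * x ^ (1 / p) *
        (μ i + (∑ k, Q i k * ζ k) - b i * x ^ θ i
          + ((1 - p) / (2 * p)) * σ₂ i ^ 2 * x ^ (2 * γ i)
          + σ₁ i ^ 2 / (2 * p)
          - (ζ i / (p + ζ i)) * (∑ k, Q i k * ζ k))
      ≤ -K * x ^ (1 / p) := by

  haveI : Nonempty (Fin m) := Fin.pos_iff_nonempty.mp hm
  have hp0 : (0:ℝ) < p := lt_trans one_pos hp
  have hS : ∀ i, (∑ k, Q i k * ζ k) = -μ i + c := by
    intro i
    have h := congrFun hζ i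
    simpa [Matrix.mulVec, dotProduct, Pi.add_apply, Pi.neg_apply, Pi.smul_apply,
      smul_eq_mul] using h
  set f : Fin m → ℝ := fun i => (1/p) * (p + ζ i) *
      (μ i + (∑ k, Q i k * ζ k) + σ₁ i ^ 2 / (2*p)
        - (ζ i / (p + ζ i)) * (∑ k, Q i k * ζ k)) with hf
  have hfneg : ∀ i, f i < 0 := by
    intro i
    have h1 := hpcond i
    have h2 : 0 < p + ζ i := hpζ i
    have key : f i = ((p + ζ i)/p) *
        ((p / (p + ζ i)) * c + σ₁ i ^ 2 / (2 * p) + ζ i * μ i / (p + ζ i)) := by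
      rw [hf]
      simp only []
      rw [hS i]
      field_simp
      ring
    rw [key]
    exact mul_neg_of_pos_of_neg (by positivity) h1
  refine ⟨Finset.univ.inf' Finset.univ_nonempty (fun i => -f i), ?_, ?_⟩
  · rw [Finset.lt_inf'_iff]
    intro i _
    linarith [hfneg i]
  · intro x hx i
    set K := Finset.univ.inf' Finset.univ_nonempty (fun i => -f i) with hK
    have hx1 : (0:ℝ) < x ^ (1/p) := Real.rpow_pos_of_pos hx _
    have hKf : K ≤ -f i := Finset.inf'_le _ (Finset.mem_univ i)
    have hC : 0 ≤ (1/p) * (p + ζ i) * x ^ (1/p) := by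
      have := hpζ i
      positivity
    have hN : -(b i) * x ^ θ i + ((1 - p) / (2 * p)) * σ₂ i ^ 2 * x ^ (2 * γ i) ≤ 0 := by
      have h1 : 0 < x ^ θ i := Real.rpow_pos_of_pos hx _
      have h2 : 0 < x ^ (2 * γ i) := Real.rpow_pos_of_pos hx _
      have h3 : (1 - p) / (2 * p) ≤ 0 := by
        apply div_nonpos_of_nonpos_of_nonneg <;> linarith
      have h4 : ((1 - p) / (2 * p)) * σ₂ i ^ 2 * x ^ (2 * γ i) ≤ 0 := by
        have : ((1 - p) / (2 * p)) * σ₂ i ^ 2 ≤ 0 :=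
          mul_nonpos_of_nonpos_of_nonneg h3 (sq_nonneg _)
        exact mul_nonpos_of_nonpos_of_nonneg this h2.le
      nlinarith [hb i]
    have step1 : (1 / p) * (p + ζ i) * x ^ (1 / p) *
        (μ i + (∑ k, Q i k * ζ k) - b i * x ^ θ i
          + ((1 - p) / (2 * p)) * σ₂ i ^ 2 * x ^ (2 * γ i)
          + σ₁ i ^ 2 / (2 * p)
          - (ζ i / (p + ζ i)) * (∑ k, Q i k * ζ k))
        ≤ (1 / p) * (p + ζ i) * x ^ (1 / p) *
        (μ i + (∑ k, Q i k * ζ k) + σ₁ i ^ 2 / (2*p)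
          - (ζ i / (p + ζ i)) * (∑ k, Q i k * ζ k)) := by
      apply mul_le_mul_of_nonneg_left _ hC
      linarith [hN]
    have step2 : (1 / p) * (p + ζ i) * x ^ (1 / p) *
        (μ i + (∑ k, Q i k * ζ k) + σ₁ i ^ 2 / (2*p)
          - (ζ i / (p + ζ i)) * (∑ k, Q i k * ζ k)) = f i * x ^ (1/p) := by
      rw [hf]; ring
    have step3 : f i * x ^ (1/p) ≤ -K * x ^ (1/p) := by
      apply mul_le_mul_of_nonneg_right _ hx1.le
      linarith
    calc _ ≤ _ := step1
    _ = f i * x ^ (1/p) := step2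
    _ ≤ -K * x ^ (1/p) := step3
end
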